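/- arXiv:2206.08780 — 4 statements merged into one kernel-verified Lean document; each statement's English description precedes it below -/
import Mathlib

section
/- Let x₁ < x₂ < ⋯ < xₙ be points in [0,1) and μₙ = (1/n)∑ᵢ δ_{xᵢ} the associated empirical measure on the circle S¹. Let ν = Unif(S¹). Then W₂²(μₙ, ν) = (1/n)∑ᵢ xᵢ² − ((1/n)∑ᵢ xᵢ)² + (1/n²)∑ᵢ (n+1−2i) xᵢ + 1/12. -/
/-!
On the `i`-th cell `[i/n, (i+1)/n)` the quantile function is the constant `xᵢ`, and
`∫ (c - t)² dt` over an interval of length `h` with midpoint `m` is `h (c - m)² + h³/12`.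
Hence the cost of the shift `α` is `(1/n) ∑ (zᵢ - α)² + 1/(12n²)` with `zᵢ = xᵢ - (2i+1)/(2n)`,
a parabola in `α` whose minimum is the empirical variance of `z` plus `1/(12n²)`; expanding
the variance of `z` gives the closed form.
-/

open MeasureTheory Set

theorem integral_sub_id_sq (c a b : ℝ) :
    ∫ t in a..b, (c - t) ^ 2 = (b - a) * (c - (a + b) / 2) ^ 2 + (b - a) ^ 3 / 12 := by
  rw [intervalIntegral.integral_comp_sub_left (fun t => t ^ 2), integral_pow]
  ring

theorem integral_zero_one_eq_sum_of_eqOn_Ico {n : ℕ} (hn : 0 < n) {f : ℝ → ℝ}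
    {g : Fin n → ℝ → ℝ} (hg : ∀ i, Continuous (g i))
    (hfg : ∀ i : Fin n, EqOn f (g i) (Ico (i / n) ((i + 1) / n))) :
    ∫ t in (0 : ℝ)..1, f t = ∑ i : Fin n, ∫ t in (i / n : ℝ)..((i + 1) / n), g i t := by
  have hnode : ∀ i : ℕ, (i : ℝ) / n ≤ (i + 1) / n := fun i => by gcongr; linarith
  have hpiece : ∀ i : Fin n, EqOn f (g i) (uIoo (i / n : ℝ) ((i + 1) / n)) := fun i =>
    (uIoo_of_le (hnode i)).symm ▸ (hfg i).mono Ioo_subset_Ico_self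
  have hsum := intervalIntegral.sum_integral_adjacent_intervals (μ := volume) (f := f)
    (a := fun k : ℕ => (k : ℝ) / n) (n := n) fun k hk => by
      simpa using ((hg ⟨k, hk⟩).intervalIntegrable _ _).congr_uIoo (hpiece ⟨k, hk⟩).symm
  have hn' : (n : ℝ) ≠ 0 := by positivity
  simp only [Nat.cast_zero, zero_div, div_self hn', Nat.cast_add, Nat.cast_one] at hsum
  rw [← hsum, ← Fin.sum_univ_eq_sum_range (fun k => ∫ t in (k / n : ℝ)..((k + 1) / n), f t)]
  exact Finset.sum_congr rfl fun i _ => intervalIntegral.integral_congr_uIoo (hpiece i)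

theorem integral_Icc_sq_sub_id_sub_of_eqOn_Ico {n : ℕ} (hn : 0 < n) (x : Fin n → ℝ)
    {F : ℝ → ℝ} (hF : ∀ i : Fin n, ∀ t ∈ Ico ((i : ℝ) / n) ((i + 1) / n), F t = x i) (α : ℝ) :
    ∫ t in Icc (0 : ℝ) 1, (F t - t - α) ^ 2 =
      (∑ i, (x i - (2 * i + 1) / (2 * n) - α) ^ 2) / n + 1 / (12 * n ^ 2) := by
  have hn' : (n : ℝ) ≠ 0 := by positivity
  rw [integral_Icc_eq_integral_Ioc, ← intervalIntegral.integral_of_le zero_le_one,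
    integral_zero_one_eq_sum_of_eqOn_Ico hn (g := fun i t => (x i - α - t) ^ 2)
      (fun i => by fun_prop) fun i t ht => by simp only [hF i t ht]; ring]
  simp only [integral_sub_id_sq]
  calc _ = ∑ i : Fin n, ((x i - (2 * i + 1) / (2 * n) - α) ^ 2 / n + 1 / (12 * n ^ 3)) :=
        Finset.sum_congr rfl fun i _ => by field_simp; ring
    _ = _ := by
        rw [Finset.sum_add_distrib, ← Finset.sum_div, Finset.sum_const, Finset.card_univ,
          Fintype.card_fin, nsmul_eq_mul]
        congr 1
        field_simp

theorem Finset.sum_sub_sq_div_card {ι : Type*} {s : Finset ι} (hs : s.Nonempty) (z : ι → ℝ)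
    (α : ℝ) :
    (∑ i ∈ s, (z i - α) ^ 2) / s.card =
      (α - (∑ i ∈ s, z i) / s.card) ^ 2 +
        ((∑ i ∈ s, z i ^ 2) / s.card - ((∑ i ∈ s, z i) / s.card) ^ 2) := by
  have hs' : (s.card : ℝ) ≠ 0 := by simp [hs.ne_empty]
  simp only [sub_sq, Finset.sum_add_distrib, Finset.sum_sub_distrib, ← Finset.sum_mul,
    ← Finset.mul_sum, Finset.sum_const, nsmul_eq_mul]
  field_simp
  ring

theorem ciInf_sq_sub_add (m K : ℝ) : ⨅ α : ℝ, ((α - m) ^ 2 + K) = K :=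
  ciInf_eq_of_forall_ge_of_forall_gt_exists_lt (fun α => by nlinarith [sq_nonneg (α - m)])
    fun w hw => ⟨m, by simpa using hw⟩

theorem sum_fin_two_mul_add_one (n : ℕ) : ∑ i : Fin n, (2 * (i : ℝ) + 1) = (n : ℝ) ^ 2 := by
  rw [Fin.sum_univ_eq_sum_range (fun i => 2 * (i : ℝ) + 1)]
  induction n with
  | zero => simp
  | succ n ih => rw [Finset.sum_range_succ, ih]; push_cast; ring

theorem sum_fin_two_mul_add_one_sq (n : ℕ) :
    ∑ i : Fin n, (2 * (i : ℝ) + 1) ^ 2 = (n : ℝ) * (4 * n ^ 2 - 1) / 3 := by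
  rw [Fin.sum_univ_eq_sum_range (fun i => (2 * (i : ℝ) + 1) ^ 2)]
  induction n with
  | zero => simp
  | succ n ih => rw [Finset.sum_range_succ, ih]; push_cast; ring

theorem variance_sub_cell_midpoints {n : ℕ} (hn : 0 < n) (x : Fin n → ℝ) :
    (∑ i, (x i - (2 * i + 1) / (2 * n)) ^ 2) / n
        - ((∑ i, (x i - (2 * i + 1) / (2 * n))) / n) ^ 2 + 1 / (12 * n ^ 2) =
      (∑ i, x i ^ 2) / n - ((∑ i, x i) / n) ^ 2
        + (∑ i : Fin n, ((n : ℝ) + 1 - 2 * ((i : ℝ) + 1)) * x i) / n ^ 2 + 1 / 12 := by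
  have hn' : (n : ℝ) ≠ 0 := by positivity
  have hlin : ∑ i : Fin n, (x i - (2 * i + 1) / (2 * n)) = ∑ i, x i - n / 2 := by
    rw [Finset.sum_sub_distrib, ← Finset.sum_div, sum_fin_two_mul_add_one]
    field_simp
  have hcross : ∑ i : Fin n, 2 * x i * ((2 * i + 1) / (2 * n)) =
      (∑ i : Fin n, (2 * i + 1) * x i) / n := by
    rw [Finset.sum_div]
    exact Finset.sum_congr rfl fun i _ => by field_simp
  have hquad : ∑ i : Fin n, (x i - (2 * i + 1) / (2 * n)) ^ 2 =
      ∑ i, x i ^ 2 - (∑ i : Fin n, (2 * i + 1) * x i) / n + (4 * n ^ 2 - 1) / (12 * n) := by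
    simp only [sub_sq, Finset.sum_add_distrib, Finset.sum_sub_distrib, hcross, div_pow,
      ← Finset.sum_div, sum_fin_two_mul_add_one_sq]
    field_simp
    ring
  have hweights : ∑ i : Fin n, ((n : ℝ) + 1 - 2 * ((i : ℝ) + 1)) * x i =
      n * ∑ i, x i - ∑ i : Fin n, (2 * i + 1) * x i := by
    rw [Finset.mul_sum, ← Finset.sum_sub_distrib]
    exact Finset.sum_congr rfl fun i _ => by ring
  rw [hlin, hquad, hweights]
  field_simp
  ring

theorem stmt_1_general (n : ℕ) (hn : 0 < n) (x : Fin n → ℝ)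
    (Finv : ℝ → ℝ)
    (hF : ∀ i : Fin n, ∀ t ∈ Set.Ico ((i : ℝ) / n) (((i : ℝ) + 1) / n), Finv t = x i) :
    (⨅ α : ℝ, ∫ t in Set.Icc (0:ℝ) 1, (Finv t - t - α) ^ 2) =
      (∑ i, x i ^ 2) / n - ((∑ i, x i) / n) ^ 2
        + (∑ i : Fin n, ((n : ℝ) + 1 - 2 * ((i : ℝ) + 1)) * x i) / n ^ 2 + 1 / 12 := by
  have : NeZero n := ⟨hn.ne'⟩
  have hparabola := Finset.sum_sub_sq_div_card Finset.univ_nonempty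
    (fun i : Fin n => x i - (2 * i + 1) / (2 * n))
  simp only [Finset.card_univ, Fintype.card_fin] at hparabola
  simp only [integral_Icc_sq_sub_id_sub_of_eqOn_Ico hn x hF, hparabola, add_assoc,
    ciInf_sq_sub_add]
  rw [← add_assoc]
  exact variance_sub_cell_midpoints hn x

/-- Closed form of `W₂²(μₙ, Unif(S¹))` for an empirical measure of sorted points
`x₁ < ⋯ < xₙ` in `[0,1)`: the circular `W₂²` (infimum over shifts `α` of
`∫₀¹ (F⁻¹(t) − t − α)² dt`) equals
`(1/n)∑ xᵢ² − ((1/n)∑ xᵢ)² + (1/n²)∑ (n+1−2i) xᵢ + 1/12`. -/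
theorem stmt_1 (n : ℕ) (hn : 0 < n) (x : Fin n → ℝ) (hmono : StrictMono x)
    (hmem : ∀ i, x i ∈ Set.Ico (0:ℝ) 1)
    (Finv : ℝ → ℝ)
    (hF : ∀ i : Fin n, ∀ t ∈ Set.Ico ((i : ℝ) / n) (((i : ℝ) + 1) / n), Finv t = x i) :
    (⨅ α : ℝ, ∫ t in Set.Icc (0:ℝ) 1, (Finv t - t - α) ^ 2) =
      (∑ i, x i ^ 2) / n - ((∑ i, x i) / n) ^ 2
        + (∑ i : Fin n, ((n : ℝ) + 1 - 2 * ((i : ℝ) + 1)) * x i) / n ^ 2 + 1 / 12 :=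
  stmt_1_general n hn x Finv hF
end

section
/- For p ≥ 1, the spherical sliced-Wasserstein discrepancy SSW_p is a pseudo-metric on the set of absolutely continuous probability measures on S^{d−1} with finite p-th moment: it is nonnegative, symmetric, vanishes on the diagonal, and satisfies the triangle inequality. -/
open MeasureTheory Matrix

/-- Borel measurable-space structure on `d × 2` real matrices (entrywise). -/
instance (d : ℕ) : MeasurableSpace (Matrix (Fin d) (Fin 2) ℝ) :=
  MeasurableSpace.pi

/-- Geodesic projection onto the great circle generated by `U`, expressed in the
coordinates of `S¹`: `P^U(x) = Uᵀx / ‖Uᵀx‖₂`. -/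
noncomputable def projS1 (d : ℕ) (U : Matrix (Fin d) (Fin 2) ℝ)
    (x : EuclideanSpace ℝ (Fin d)) : EuclideanSpace ℝ (Fin 2) :=
  (‖Matrix.toEuclideanLin Uᵀ x‖)⁻¹ • Matrix.toEuclideanLin Uᵀ x

/-- The spherical sliced-Wasserstein discrepancy
`SSW_p(μ,ν) = (∫_{V_{d,2}} W_p^p(P^U_#μ, P^U_#ν) dσ(U))^{1/p}`, where `W` denotes
the `p`-Wasserstein distance on the circle. -/
noncomputable def SSW (d : ℕ) (p : ℝ) (σ : Measure (Matrix (Fin d) (Fin 2) ℝ))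
    (W : Measure (EuclideanSpace ℝ (Fin 2)) → Measure (EuclideanSpace ℝ (Fin 2)) → ℝ)
    (μ ν : Measure (EuclideanSpace ℝ (Fin d))) : ℝ :=
  (∫ U, (W (μ.map (projS1 d U)) (ν.map (projS1 d U))) ^ p ∂σ) ^ (1 / p)

private theorem ssw_minkowski (p : ℝ) (hp : 1 ≤ p) {α : Type*} [MeasurableSpace α]
    (σ : Measure α)
    (F f g : α → ℝ) (hF0 : ∀ x, 0 ≤ F x) (hf0 : ∀ x, 0 ≤ f x) (hg0 : ∀ x, 0 ≤ g x)
    (htri : ∀ x, F x ≤ f x + g x)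
    (hFi : Integrable (fun x => F x ^ p) σ)
    (hfi : Integrable (fun x => f x ^ p) σ)
    (hgi : Integrable (fun x => g x ^ p) σ) :
    (∫ x, F x ^ p ∂σ) ^ (1/p) ≤ (∫ x, f x ^ p ∂σ) ^ (1/p) + (∫ x, g x ^ p ∂σ) ^ (1/p) := by
  have hp0 : 0 < p := lt_of_lt_of_le one_pos hp
  have key : ∀ (h : α → ℝ), (∀ x, 0 ≤ h x) → Integrable (fun x => h x ^ p) σ →
      AEMeasurable (fun x => ENNReal.ofReal (h x)) σ ∧
      (∫ x, h x ^ p ∂σ) = (∫⁻ x, ENNReal.ofReal (h x) ^ p ∂σ).toReal ∧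
      (∫⁻ x, ENNReal.ofReal (h x) ^ p ∂σ) ≠ ⊤ := by
    intro h h0 hi
    have hmp : AEMeasurable (fun x => h x ^ p) σ := hi.aemeasurable
    have hm : AEMeasurable h σ := by
      have : AEMeasurable (fun x => (h x ^ p) ^ p⁻¹) σ :=
        ((Real.continuous_rpow_const (by positivity : (0:ℝ) ≤ p⁻¹)).measurable.comp_aemeasurable hmp)
      refine this.congr (Filter.Eventually.of_forall fun x => ?_)
      exact Real.rpow_rpow_inv (h0 x) hp0.ne'
    have heq : ∀ x, ENNReal.ofReal (h x ^ p) = ENNReal.ofReal (h x) ^ p := fun x =>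
      (ENNReal.ofReal_rpow_of_nonneg (h0 x) hp0.le).symm
    refine ⟨ENNReal.measurable_ofReal.comp_aemeasurable hm, ?_, ?_⟩
    · rw [integral_eq_lintegral_of_nonneg_ae
        (Filter.Eventually.of_forall fun x => Real.rpow_nonneg (h0 x) p) hi.aestronglyMeasurable]
      congr 1
      exact lintegral_congr fun x => heq x
    · have := hi.hasFiniteIntegral
      rw [hasFiniteIntegral_iff_ofReal
        (Filter.Eventually.of_forall fun x => Real.rpow_nonneg (h0 x) p)] at this
      rw [← lintegral_congr fun x => heq x]
      exact this.ne
  obtain ⟨hFm, hFeq, hFfin⟩ := key F hF0 hFi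
  obtain ⟨hfm, hfeq, hffin⟩ := key f hf0 hfi
  obtain ⟨hgm, hgeq, hgfin⟩ := key g hg0 hgi
  rw [hFeq, hfeq, hgeq]
  have hmink := ENNReal.lintegral_Lp_add_le hfm hgm hp
  have hmono : (∫⁻ x, ENNReal.ofReal (F x) ^ p ∂σ) ≤
      ∫⁻ x, ((fun x => ENNReal.ofReal (f x)) + fun x => ENNReal.ofReal (g x)) x ^ p ∂σ := by
    refine lintegral_mono fun x => ?_
    refine ENNReal.rpow_le_rpow ?_ hp0.le
    simp only [Pi.add_apply]
    rw [← ENNReal.ofReal_add (hf0 x) (hg0 x)]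
    exact ENNReal.ofReal_le_ofReal (htri x)
  have h1 : (∫⁻ x, ENNReal.ofReal (F x) ^ p ∂σ) ^ (1/p) ≤
      (∫⁻ x, ENNReal.ofReal (f x) ^ p ∂σ) ^ (1/p) +
      (∫⁻ x, ENNReal.ofReal (g x) ^ p ∂σ) ^ (1/p) :=
    le_trans (ENNReal.rpow_le_rpow hmono (by positivity)) hmink
  have hrhs : (∫⁻ x, ENNReal.ofReal (f x) ^ p ∂σ) ^ (1/p) +
      (∫⁻ x, ENNReal.ofReal (g x) ^ p ∂σ) ^ (1/p) ≠ ⊤ := by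
    refine ENNReal.add_ne_top.2 ⟨?_, ?_⟩ <;>
      exact ENNReal.rpow_ne_top_of_nonneg (by positivity) (by assumption)
  calc (∫⁻ x, ENNReal.ofReal (F x) ^ p ∂σ).toReal ^ (1/p)
      = ((∫⁻ x, ENNReal.ofReal (F x) ^ p ∂σ) ^ (1/p)).toReal := ENNReal.toReal_rpow _ _
    _ ≤ ((∫⁻ x, ENNReal.ofReal (f x) ^ p ∂σ) ^ (1/p) +
        (∫⁻ x, ENNReal.ofReal (g x) ^ p ∂σ) ^ (1/p)).toReal := ENNReal.toReal_mono hrhs h1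
    _ = _ := by
        rw [ENNReal.toReal_add (ENNReal.rpow_ne_top_of_nonneg (by positivity) hffin)
          (ENNReal.rpow_ne_top_of_nonneg (by positivity) hgfin),
          ← ENNReal.toReal_rpow, ← ENNReal.toReal_rpow]

/-- For `p ≥ 1`, `SSW_p` is a pseudo-metric on absolutely continuous probability
measures on `S^{d−1}`: nonnegative, symmetric, vanishing on the diagonal, and
satisfying the triangle inequality, given that `W` (the `p`-Wasserstein distance
on the circle with geodesic cost) is a metric. -/
theorem stmt_10 (d : ℕ) (p : ℝ) (hp : 1 ≤ p)
    (σ : Measure (Matrix (Fin d) (Fin 2) ℝ)) [IsProbabilityMeasure σ]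
    (hσ : σ {U | Uᵀ * U = 1}ᶜ = 0)
    (W : Measure (EuclideanSpace ℝ (Fin 2)) → Measure (EuclideanSpace ℝ (Fin 2)) → ℝ)
    (hW0 : ∀ m₁ m₂, 0 ≤ W m₁ m₂)
    (hWsymm : ∀ m₁ m₂, W m₁ m₂ = W m₂ m₁)
    (hWself : ∀ m, W m m = 0)
    (hWtri : ∀ m₁ m₂ m₃, W m₁ m₃ ≤ W m₁ m₂ + W m₂ m₃)
    (hInt : ∀ μ ν : Measure (EuclideanSpace ℝ (Fin d)),
      Integrable (fun U => (W (μ.map (projS1 d U)) (ν.map (projS1 d U))) ^ p) σ) :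
    ∀ μ ν α : Measure (EuclideanSpace ℝ (Fin d)),
      IsProbabilityMeasure μ → IsProbabilityMeasure ν → IsProbabilityMeasure α →
      μ {x | ‖x‖ = 1}ᶜ = 0 → ν {x | ‖x‖ = 1}ᶜ = 0 → α {x | ‖x‖ = 1}ᶜ = 0 →
      0 ≤ SSW d p σ W μ ν ∧
      SSW d p σ W μ ν = SSW d p σ W ν μ ∧
      SSW d p σ W μ μ = 0 ∧
      SSW d p σ W μ ν ≤ SSW d p σ W μ α + SSW d p σ W α ν := by
  intro μ ν α _ _ _ _ _ _
  have hp0 : 0 < p := lt_of_lt_of_le one_pos hp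
  refine ⟨?_, ?_, ?_, ?_⟩
  · exact Real.rpow_nonneg
      (integral_nonneg fun U => Real.rpow_nonneg (hW0 _ _) p) _
  · unfold SSW
    congr 1
    exact integral_congr_ae (Filter.Eventually.of_forall fun U => by show _ ^ p = _ ^ p; rw [hWsymm])
  · unfold SSW
    have : ∀ U : Matrix (Fin d) (Fin 2) ℝ,
        (W (μ.map (projS1 d U)) (μ.map (projS1 d U))) ^ p = 0 := fun U => by
      rw [hWself, Real.zero_rpow hp0.ne']
    rw [integral_congr_ae (Filter.Eventually.of_forall this), integral_zero,
      Real.zero_rpow (by positivity : (1/p) ≠ 0)]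
  · exact ssw_minkowski p hp σ _ _ _ (fun U => hW0 _ _) (fun U => hW0 _ _)
      (fun U => hW0 _ _) (fun U => hWtri _ _ _) (hInt μ ν) (hInt μ α) (hInt α ν)
end

section
/- Let μ_k, μ be probability measures in P_p(S^{d−1}) (absolutely continuous) such that μ_k converges weakly to μ. Then SSW_p(μ_k, μ) → 0 as k → ∞. -/
open MeasureTheory Matrix Filter

/-! For every `U` with `Uᵀ U = 1`, the projection `P^U` is continuous outside the `μ`-null set
`{x | Uᵀ x = 0}`, so the continuous mapping theorem transports the weak convergence `μ_k → μ`
to `P^U_# μ_k → P^U_# μ` on the circle, where `W` metrizes it. Since `W` is bounded, dominated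
convergence then passes the pointwise limit through the integral over `U`. -/

open scoped Topology

namespace MeasureTheory.ProbabilityMeasure

theorem tendsto_map_of_tendsto_of_continuousOn {Ω Ω' ι : Type*}
    [MeasurableSpace Ω] [TopologicalSpace Ω] [OpensMeasurableSpace Ω] [HasOuterApproxClosed Ω]
    [MeasurableSpace Ω'] [TopologicalSpace Ω'] [OpensMeasurableSpace Ω']
    {L : Filter ι} [L.IsCountablyGenerated] {νs : ι → ProbabilityMeasure Ω}
    {ν : ProbabilityMeasure Ω} (lim : Tendsto νs L (𝓝 ν)) {f : Ω → Ω'} (hf : Measurable f)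
    {S : Set Ω} (hS : IsOpen S) (hfS : ContinuousOn f S) (hνS : (ν : Measure Ω) Sᶜ = 0) :
    Tendsto (fun i ↦ (νs i).map hf.aemeasurable) L (𝓝 (ν.map hf.aemeasurable)) := by
  refine tendsto_of_forall_isOpen_le_liminf' fun G hG ↦ ?_
  simp only [toMeasure_map, Measure.map_apply hf hG.measurableSet]
  calc (ν : Measure Ω) (f ⁻¹' G) = (ν : Measure Ω) (S ∩ f ⁻¹' G) := by
        rw [Set.inter_comm, measure_inter_conull hνS]
    _ ≤ L.liminf fun i ↦ (νs i : Measure Ω) (S ∩ f ⁻¹' G) :=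
      le_liminf_measure_open_of_tendsto lim (hfS.isOpen_inter_preimage hS hG)
    _ ≤ L.liminf fun i ↦ (νs i : Measure Ω) (f ⁻¹' G) :=
      liminf_le_liminf (.of_forall fun _ ↦ measure_mono Set.inter_subset_right)

end MeasureTheory.ProbabilityMeasure

section projS1

variable {d : ℕ} {U : Matrix (Fin d) (Fin 2) ℝ}

theorem measurable_projS1 : Measurable (projS1 d U) :=
  have hL := (Matrix.toEuclideanLin Uᵀ).continuous_of_finiteDimensional.measurable
  hL.norm.inv.smul hL

theorem continuousOn_projS1 : ContinuousOn (projS1 d U) {x | Matrix.toEuclideanLin Uᵀ x ≠ 0} :=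
  have hL := (Matrix.toEuclideanLin Uᵀ).continuous_of_finiteDimensional
  (hL.norm.continuousOn.inv₀ fun _ hx ↦ norm_ne_zero_iff.mpr hx).smul hL.continuousOn

theorem tendsto_integral_map_projS1 {μs : ℕ → Measure (EuclideanSpace ℝ (Fin d))}
    {μ : Measure (EuclideanSpace ℝ (Fin d))} [∀ k, IsProbabilityMeasure (μs k)]
    [IsProbabilityMeasure μ]
    (hweak : ∀ f : BoundedContinuousFunction (EuclideanSpace ℝ (Fin d)) ℝ,
      Tendsto (fun k ↦ ∫ x, f x ∂μs k) atTop (𝓝 (∫ x, f x ∂μ)))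
    (hμ : μ {x | Matrix.toEuclideanLin Uᵀ x = 0} = 0)
    (f : BoundedContinuousFunction (EuclideanSpace ℝ (Fin 2)) ℝ) :
    Tendsto (fun k ↦ ∫ z, f z ∂(μs k).map (projS1 d U)) atTop
      (𝓝 (∫ z, f z ∂μ.map (projS1 d U))) := by
  have hL := (Matrix.toEuclideanLin Uᵀ).continuous_of_finiteDimensional
  have lim := ProbabilityMeasure.tendsto_iff_forall_integral_tendsto
    (μs := fun k ↦ ⟨μs k, inferInstance⟩) (μ := ⟨μ, inferInstance⟩) |>.mpr hweak
  exact ProbabilityMeasure.tendsto_iff_forall_integral_tendsto.mp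
    (ProbabilityMeasure.tendsto_map_of_tendsto_of_continuousOn lim measurable_projS1
      (isOpen_ne_fun hL continuous_const) continuousOn_projS1 (by simpa [Set.compl_ofPred] using hμ)) f

end projS1

theorem tendsto_integral_rpow_rpow_inv_of_ae_tendsto_zero {α ι : Type*} [MeasurableSpace α]
    {σ : Measure α} [IsFiniteMeasure σ] {L : Filter ι} [L.IsCountablyGenerated]
    {F : ι → α → ℝ} {p C : ℝ} (hp : 0 < p) (hF : ∀ i, AEMeasurable (fun a ↦ F i a ^ p) σ)
    (hF0 : ∀ i a, 0 ≤ F i a) (hFC : ∀ i a, F i a ≤ C)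
    (hlim : ∀ᵐ a ∂σ, Tendsto (fun i ↦ F i a) L (𝓝 0)) :
    Tendsto (fun i ↦ (∫ a, F i a ^ p ∂σ) ^ (1 / p)) L (𝓝 0) := by
  have hint : Tendsto (fun i ↦ ∫ a, F i a ^ p ∂σ) L (𝓝 (∫ _, (0 : ℝ) ^ p ∂σ)) := by
    refine tendsto_integral_filter_of_dominated_convergence (fun _ ↦ C ^ p)
      (.of_forall fun i ↦ (hF i).aestronglyMeasurable) (.of_forall fun i ↦ ?_)
      (integrable_const _) ?_
    · refine .of_forall fun a ↦ ?_
      rw [Real.norm_of_nonneg (Real.rpow_nonneg (hF0 i a) p)]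
      exact Real.rpow_le_rpow (hF0 i a) (hFC i a) hp.le
    · filter_upwards [hlim] with a ha
      exact (Real.continuousAt_rpow_const 0 p (Or.inr hp.le)).tendsto.comp ha
  rw [Real.zero_rpow hp.ne', integral_zero] at hint
  have h := (Real.continuousAt_rpow_const 0 (1 / p) (Or.inr (by positivity))).tendsto.comp hint
  rwa [Real.zero_rpow (by positivity)] at h

theorem stmt_14_general (d : ℕ) (p : ℝ) (hp : 1 ≤ p)
    (σ : Measure (Matrix (Fin d) (Fin 2) ℝ)) [IsProbabilityMeasure σ]
    (hσ : σ {U | Uᵀ * U = 1}ᶜ = 0)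
    (W : Measure (EuclideanSpace ℝ (Fin 2)) → Measure (EuclideanSpace ℝ (Fin 2)) → ℝ)
    (hW0 : ∀ m₁ m₂, 0 ≤ W m₁ m₂)
    (C : ℝ) (hWbd : ∀ m₁ m₂, W m₁ m₂ ≤ C)
    (hWweak : ∀ (mk : ℕ → Measure (EuclideanSpace ℝ (Fin 2)))
        (m : Measure (EuclideanSpace ℝ (Fin 2))),
      (∀ f : BoundedContinuousFunction (EuclideanSpace ℝ (Fin 2)) ℝ,
        Tendsto (fun k => ∫ z, f z ∂(mk k)) atTop (nhds (∫ z, f z ∂m))) →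
      Tendsto (fun k => W (mk k) m) atTop (nhds 0))
    (μs : ℕ → Measure (EuclideanSpace ℝ (Fin d)))
    (μ : Measure (EuclideanSpace ℝ (Fin d)))
    [∀ k, IsProbabilityMeasure (μs k)] [IsProbabilityMeasure μ]
    (hac : ∀ U : Matrix (Fin d) (Fin 2) ℝ, Uᵀ * U = 1 →
      μ {x | Matrix.toEuclideanLin Uᵀ x = 0} = 0)
    (hweak : ∀ f : BoundedContinuousFunction (EuclideanSpace ℝ (Fin d)) ℝ,
      Tendsto (fun k => ∫ x, f x ∂(μs k)) atTop (nhds (∫ x, f x ∂μ)))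
    (hmeas : ∀ k, AEMeasurable
      (fun U => (W ((μs k).map (projS1 d U)) (μ.map (projS1 d U))) ^ p) σ) :
    Tendsto
      (fun k => (∫ U, (W ((μs k).map (projS1 d U)) (μ.map (projS1 d U))) ^ p ∂σ) ^ (1 / p))
      atTop (nhds 0) := by
  refine tendsto_integral_rpow_rpow_inv_of_ae_tendsto_zero (by linarith) hmeas
    (fun _ _ ↦ hW0 _ _) (fun _ _ ↦ hWbd _ _) ?_
  filter_upwards [(ae_iff.mpr hσ : ∀ᵐ U ∂σ, Uᵀ * U = 1)] with U hU
  exact hWweak _ _ (tendsto_integral_map_projS1 hweak (hac U hU))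

/-- Weak convergence implies SSW convergence: if `μ_k → μ` weakly in
`P_p(S^{d−1})` (absolutely continuous measures), then `SSW_p(μ_k, μ) → 0`.
Here `W` is the `p`-Wasserstein distance on the circle, which is bounded and
metrizes weak convergence on the compact circle. -/
theorem stmt_14 (d : ℕ) (p : ℝ) (hp : 1 ≤ p)
    (σ : Measure (Matrix (Fin d) (Fin 2) ℝ)) [IsProbabilityMeasure σ]
    (hσ : σ {U | Uᵀ * U = 1}ᶜ = 0)
    (W : Measure (EuclideanSpace ℝ (Fin 2)) → Measure (EuclideanSpace ℝ (Fin 2)) → ℝ)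
    (hW0 : ∀ m₁ m₂, 0 ≤ W m₁ m₂)
    (C : ℝ) (hWbd : ∀ m₁ m₂, W m₁ m₂ ≤ C)
    (hWweak : ∀ (mk : ℕ → Measure (EuclideanSpace ℝ (Fin 2)))
        (m : Measure (EuclideanSpace ℝ (Fin 2))),
      (∀ f : BoundedContinuousFunction (EuclideanSpace ℝ (Fin 2)) ℝ,
        Tendsto (fun k => ∫ z, f z ∂(mk k)) atTop (nhds (∫ z, f z ∂m))) →
      Tendsto (fun k => W (mk k) m) atTop (nhds 0))
    (μs : ℕ → Measure (EuclideanSpace ℝ (Fin d)))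
    (μ : Measure (EuclideanSpace ℝ (Fin d)))
    [∀ k, IsProbabilityMeasure (μs k)] [IsProbabilityMeasure μ]
    (hsupp : ∀ k, μs k {x | ‖x‖ = 1}ᶜ = 0) (hsuppμ : μ {x | ‖x‖ = 1}ᶜ = 0)
    (hac : ∀ U : Matrix (Fin d) (Fin 2) ℝ, Uᵀ * U = 1 →
      μ {x | Matrix.toEuclideanLin Uᵀ x = 0} = 0)
    (hack : ∀ k, ∀ U : Matrix (Fin d) (Fin 2) ℝ, Uᵀ * U = 1 →
      μs k {x | Matrix.toEuclideanLin Uᵀ x = 0} = 0)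
    (hweak : ∀ f : BoundedContinuousFunction (EuclideanSpace ℝ (Fin d)) ℝ,
      Tendsto (fun k => ∫ x, f x ∂(μs k)) atTop (nhds (∫ x, f x ∂μ)))
    (hmeas : ∀ k, AEMeasurable
      (fun U => (W ((μs k).map (projS1 d U)) (μ.map (projS1 d U))) ^ p) σ) :
    Tendsto
      (fun k => (∫ U, (W ((μs k).map (projS1 d U)) (μ.map (projS1 d U))) ^ p ∂σ) ^ (1 / p))
      atTop (nhds 0) :=
  stmt_14_general d p hp σ hσ W hW0 C hWbd hWweak μs μ hac hweak hmeas
end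

section
/- For the W₁ distance on the circle with cost the geodesic distance, and μ, ν probability measures on S¹ identified with [0,1), one has W₁(μ,ν) = ∫₀¹ |F_μ(t) − F_ν(t) − LevMed(F_μ − F_ν)| dt, where LevMed(f) is the level median of f, the smallest minimizer of α ↦ ∫₀¹ |f(t) − α| dt, characterized as inf{t ∈ ℝ : Leb({x ∈ [0,1) : f(x) ≤ t}) ≥ 1/2}. -/
/-!
A median `m` of `f` minimizes `α ↦ ∫ |f - α|`: for `α ≥ m`, the integrand grows by exactly
`α - m` on `{f ≤ m}`, which has mass at least `1/2`, and shrinks by at most `α - m` elsewhere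
(symmetrically for `α ≤ m`). The level median is a median because `t ↦ ρ {f ≤ t}` is
right-continuous. Finally `F_μ - F_ν` is a difference of two CDFs, hence bounded and measurable.
-/

open MeasureTheory

/-- The level median of `f : [0,1) → ℝ`:
`LevMed(f) = inf {t : Leb({x ∈ [0,1) : f(x) ≤ t}) ≥ 1/2}`. -/
noncomputable def LevMed (f : ℝ → ℝ) : ℝ :=
  sInf {t : ℝ | (1 / 2 : ENNReal) ≤ volume {x ∈ Set.Ico (0:ℝ) 1 | f x ≤ t}}

open Set Filter Topology ProbabilityTheory
open scoped ENNReal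

variable {Ω : Type*} [MeasurableSpace Ω]

noncomputable def levelMedian (ρ : Measure Ω) (f : Ω → ℝ) : ℝ :=
  sInf {t : ℝ | (1 / 2 : ℝ≥0∞) ≤ ρ {x | f x ≤ t}}

def IsMedian (ρ : Measure Ω) (f : Ω → ℝ) (m : ℝ) : Prop :=
  (1 / 2 : ℝ≥0∞) ≤ ρ {x | f x ≤ m} ∧ (1 / 2 : ℝ≥0∞) ≤ ρ {x | m ≤ f x}

section Median

variable {ρ : Measure Ω} {f : Ω → ℝ}

lemma le_measure_le_of_forall_gt [IsFiniteMeasure ρ] (hf : Measurable f) {c : ℝ≥0∞} {m : ℝ}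
    (h : ∀ r > m, c ≤ ρ {x | f x ≤ r}) : c ≤ ρ {x | f x ≤ m} := by
  have hinter : ⋂ r > m, {x | f x ≤ r} = {x | f x ≤ m} := by
    ext x
    simp only [mem_iInter, mem_ofPred_eq]
    exact ⟨fun hx => le_of_forall_gt_imp_ge_of_dense hx, fun hx r hr => hx.trans hr.le⟩
  have hlim := tendsto_measure_biInter_gt (μ := ρ) (s := fun r => {x | f x ≤ r}) (a := m)
    (fun r _ => (measurableSet_le hf measurable_const).nullMeasurableSet)
    (fun i j _ hij x hx => le_trans hx hij) ⟨m + 1, by linarith, measure_ne_top _ _⟩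
  rw [hinter] at hlim
  exact ge_of_tendsto hlim (eventually_nhdsWithin_of_forall h)

variable [IsProbabilityMeasure ρ]

lemma nonempty_half_le_measure_le : {t : ℝ | (1 / 2 : ℝ≥0∞) ≤ ρ {x | f x ≤ t}}.Nonempty := by
  have hunion : ⋃ t : ℝ, {x | f x ≤ t} = univ :=
    eq_univ_of_forall fun x => mem_iUnion.2 ⟨f x, le_refl (f x)⟩
  have hlim := tendsto_measure_iUnion_atTop (μ := ρ) (s := fun t => {x | f x ≤ t})
    fun s t hst x (hx : f x ≤ s) => hx.trans hst
  rw [hunion, measure_univ] at hlim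
  exact (hlim.eventually
    (eventually_ge_nhds (ENNReal.half_lt_self one_ne_zero ENNReal.one_ne_top))).exists

lemma bddBelow_half_le_measure_le (hf : Measurable f) :
    BddBelow {t : ℝ | (1 / 2 : ℝ≥0∞) ≤ ρ {x | f x ≤ t}} := by
  have hinter : ⋂ t : ℝ, {x | f x ≤ t} = ∅ :=
    eq_empty_of_forall_notMem fun x hx => by
      have := mem_iInter.1 hx (f x - 1)
      simp only [mem_ofPred_eq] at this
      linarith
  have hlim := tendsto_measure_iInter_atBot (μ := ρ) (s := fun t => {x | f x ≤ t})
    (fun t => (measurableSet_le hf measurable_const).nullMeasurableSet)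
    (fun s t hst x (hx : f x ≤ s) => hx.trans hst) ⟨0, measure_ne_top _ _⟩
  rw [hinter, measure_empty] at hlim
  obtain ⟨t₀, ht₀⟩ :=
    eventually_atBot.1 (hlim.eventually (eventually_lt_nhds (ENNReal.half_pos one_ne_zero)))
  exact ⟨t₀, fun t ht => le_of_not_ge fun htt₀ => (ht₀ t htt₀).not_ge ht⟩


lemma half_le_measure_le_levelMedian (hf : Measurable f) :
    (1 / 2 : ℝ≥0∞) ≤ ρ {x | f x ≤ levelMedian ρ f} :=
  le_measure_le_of_forall_gt hf fun r hr => by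
    obtain ⟨t, ht, htr⟩ := (csInf_lt_iff (bddBelow_half_le_measure_le hf)
      nonempty_half_le_measure_le).1 hr
    exact ht.trans (measure_mono fun x (hx : f x ≤ t) => hx.trans htr.le)

lemma half_le_measure_levelMedian_le (hf : Measurable f) :
    (1 / 2 : ℝ≥0∞) ≤ ρ {x | levelMedian ρ f ≤ f x} := by
  have half_le_measure_gt :
      ∀ r < levelMedian ρ f, (1 / 2 : ℝ≥0∞) ≤ ρ {x | r < f x} := fun r hr => by
    have hr' : r ∉ {t : ℝ | (1 / 2 : ℝ≥0∞) ≤ ρ {x | f x ≤ t}} :=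
      notMem_of_lt_csInf hr (bddBelow_half_le_measure_le hf)
    have hlt : ρ {x | f x ≤ r} < 1 / 2 := not_le.1 hr'
    have hsum :=
      measure_add_measure_compl (μ := ρ) (measurableSet_le hf (measurable_const (a := r)))
    simp only [compl_ofPred, not_le, measure_univ] at hsum
    by_contra! hgt
    have := ENNReal.add_lt_add hlt hgt
    rw [ENNReal.add_halves, hsum] at this
    exact this.false
  -- right-continuity of `t ↦ ρ {-f ≤ t}` at `-levelMedian ρ f`
  simpa only [Pi.neg_apply, neg_le_neg_iff] using le_measure_le_of_forall_gt (ρ := ρ) hf.neg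
    (m := -levelMedian ρ f) fun r hr =>
      (half_le_measure_gt (-r) (neg_lt.1 hr)).trans (measure_mono fun x (hx : -r < f x) => by
        show -f x ≤ r
        linarith)

lemma isMedian_levelMedian (hf : Measurable f) : IsMedian ρ f (levelMedian ρ f) :=
  ⟨half_le_measure_le_levelMedian hf, half_le_measure_levelMedian_le hf⟩

lemma integral_abs_sub_add_le (hf : Measurable f) (hfi : Integrable f ρ) {m α : ℝ}
    (hmα : m ≤ α) :
    ∫ x, |f x - m| ∂ρ + (α - m) * (2 * ρ.real {x | f x ≤ m} - 1) ≤ ∫ x, |f x - α| ∂ρ := by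
  set s := {x | f x ≤ m}
  have hs : MeasurableSet s := measurableSet_le hf measurable_const
  have habs : ∀ c : ℝ, Integrable (fun x => |f x - c|) ρ := fun c =>
    (hfi.sub (integrable_const c)).abs
  have hpt : ∀ x, |f x - m| + (s.indicator (fun _ => 2 * (α - m)) x - (α - m)) ≤ |f x - α| := by
    intro x
    by_cases hx : f x ≤ m
    · rw [indicator_of_mem (show x ∈ s from hx), abs_of_nonpos (by linarith),
        abs_of_nonpos (by linarith)]
      linarith
    · rw [indicator_of_notMem (show x ∉ s from hx), abs_of_pos (sub_pos.2 (not_le.1 hx))]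
      linarith [le_abs_self (f x - α)]
  have hind : Integrable (fun x => s.indicator (fun _ => 2 * (α - m)) x - (α - m)) ρ :=
    ((integrable_const _).indicator hs).sub (integrable_const _)
  calc ∫ x, |f x - m| ∂ρ + (α - m) * (2 * ρ.real s - 1)
      = ∫ x, (|f x - m| + (s.indicator (fun _ => 2 * (α - m)) x - (α - m))) ∂ρ := by
        rw [integral_add (habs m) hind, integral_sub ((integrable_const _).indicator hs)
          (integrable_const _), integral_indicator_const _ hs, integral_const]
        simp only [probReal_univ, smul_eq_mul]
        ring
    _ ≤ ∫ x, |f x - α| ∂ρ := integral_mono ((habs m).add hind) (habs α) hpt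

lemma IsMedian.integral_abs_sub_le {m : ℝ} (h : IsMedian ρ f m) (hf : Measurable f)
    (hfi : Integrable f ρ) (α : ℝ) : ∫ x, |f x - m| ∂ρ ≤ ∫ x, |f x - α| ∂ρ := by
  have half_le_real : ∀ {s : Set Ω}, (1 / 2 : ℝ≥0∞) ≤ ρ s → (1 / 2 : ℝ) ≤ ρ.real s :=
    fun hs => by
      simpa [measureReal_def] using ENNReal.toReal_mono (measure_ne_top ρ _) hs
  rcases le_total m α with hmα | hαm
  · have := integral_abs_sub_add_le hf hfi hmα
    nlinarith [half_le_real h.1]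
  · have := integral_abs_sub_add_le hf.neg hfi.neg (neg_le_neg hαm)
    simp only [Pi.neg_apply, neg_sub_neg, abs_sub_comm _ (f _), neg_le_neg_iff] at this
    nlinarith [half_le_real h.2]

lemma IsMedian.iInf_integral_abs_sub {m : ℝ} (h : IsMedian ρ f m) (hf : Measurable f)
    (hfi : Integrable f ρ) : ⨅ α, ∫ x, |f x - α| ∂ρ = ∫ x, |f x - m| ∂ρ :=
  IsLeast.csInf_eq ⟨⟨m, rfl⟩, forall_mem_range.2 (h.integral_abs_sub_le hf hfi)⟩

end Median

instance : IsProbabilityMeasure (volume.restrict (Ico (0 : ℝ) 1)) := ⟨by simp⟩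

lemma LevMed_eq_levelMedian (f : ℝ → ℝ) :
    LevMed f = levelMedian (volume.restrict (Ico 0 1)) f := by
  simp only [LevMed, levelMedian, Measure.restrict_apply' measurableSet_Ico, inter_comm]
  rfl

theorem stmt_15_general (μ ν : Measure ℝ) [IsProbabilityMeasure μ] [IsProbabilityMeasure ν]
    (F G : ℝ → ℝ)
    (hF : ∀ t, F t = (μ (Set.Iic t)).toReal) (hG : ∀ t, G t = (ν (Set.Iic t)).toReal)
    (W1 : ℝ)
    (hW1 : W1 = ⨅ α : ℝ, ∫ t in Set.Ico (0:ℝ) 1, |F t - G t - α|) :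
    W1 = ∫ t in Set.Ico (0:ℝ) 1, |F t - G t - LevMed (fun t => F t - G t)| := by
  obtain rfl : F = cdf μ := funext fun t => by rw [hF, cdf_eq_real, measureReal_def]
  obtain rfl : G = cdf ν := funext fun t => by rw [hG, cdf_eq_real, measureReal_def]
  have hmeas : Measurable fun t => cdf μ t - cdf ν t :=
    (monotone_cdf μ).measurable.sub (monotone_cdf ν).measurable
  have hint : Integrable (fun t => cdf μ t - cdf ν t) (volume.restrict (Ico 0 1)) :=
    .of_bound hmeas.aestronglyMeasurable 1 <| ae_of_all _ fun t => by
      rw [Real.norm_eq_abs, abs_sub_le_iff]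
      constructor <;> linarith [cdf_nonneg μ t, cdf_le_one μ t, cdf_nonneg ν t, cdf_le_one ν t]
  rw [hW1, LevMed_eq_levelMedian, (isMedian_levelMedian hmeas).iInf_integral_abs_sub hmeas hint]

/-- The `W₁` distance on the circle (with geodesic cost), given by
`W₁(μ,ν) = inf_α ∫₀¹ |F_μ(t) − F_ν(t) − α| dt`, is attained at the level median:
`W₁(μ,ν) = ∫₀¹ |F_μ(t) − F_ν(t) − LevMed(F_μ − F_ν)| dt`. -/
theorem stmt_15 (μ ν : Measure ℝ) [IsProbabilityMeasure μ] [IsProbabilityMeasure ν]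
    (hμ : μ (Set.Ico (0:ℝ) 1)ᶜ = 0) (hν : ν (Set.Ico (0:ℝ) 1)ᶜ = 0)
    (F G : ℝ → ℝ)
    (hF : ∀ t, F t = (μ (Set.Iic t)).toReal) (hG : ∀ t, G t = (ν (Set.Iic t)).toReal)
    (W1 : ℝ)
    (hW1 : W1 = ⨅ α : ℝ, ∫ t in Set.Ico (0:ℝ) 1, |F t - G t - α|) :
    W1 = ∫ t in Set.Ico (0:ℝ) 1, |F t - G t - LevMed (fun t => F t - G t)| :=
  stmt_15_general μ ν F G hF hG W1 hW1
end
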